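/- If a full-dimensional lattice polytope P in M_ℝ is a ℤ-join of faces F and G, then P is a Cayley join of F and G. -/

import Mathlib

open Pointwise
open scoped Classical

noncomputable section

namespace GorST

/-- Points of `d`-dimensional real space. -/
abbrev Pt (n : ℕ) := Fin n → ℝ

/-- A point of the standard lattice `ℤ^n ⊂ ℝ^n`. -/
def isLatticePt {n : ℕ} (x : Pt n) : Prop := ∀ i, ∃ k : ℤ, x i = (k : ℝ)

/-- The standard lattice `ℤ^n` inside `ℝ^n`. -/
def stdL (n : ℕ) : Set (Pt n) := {x | isLatticePt x}

/-- The standard pairing (dot product). -/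
def dot {n : ℕ} (x y : Pt n) : ℝ := ∑ i, x i * y i

/-- `S` is a lattice polytope with respect to the lattice `L`:
it is the convex hull of finitely many points of `L`.  (The empty set is allowed.) -/
def IsLat {n : ℕ} (L S : Set (Pt n)) : Prop :=
  ∃ V : Finset (Pt n), ↑V ⊆ L ∧ S = convexHull ℝ (V : Set (Pt n))

/-- `F` is a face of `S` (exposed face; this includes the improper faces `∅` and `S`). -/
def IsFaceOf {n : ℕ} (F S : Set (Pt n)) : Prop := IsExposed ℝ S F

/-- Dimension of a polytope, with `dim ∅ = -1`. -/
def dimP {n : ℕ} (S : Set (Pt n)) : ℤ :=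
  if S = ∅ then -1 else (Module.finrank ℝ (affineSpan ℝ S).direction : ℤ)

/-- Dimension as a natural number (for nonempty polytopes). -/
def dimNat {n : ℕ} (S : Set (Pt n)) : ℕ := Module.finrank ℝ (affineSpan ℝ S).direction

/-- Number of points of `L` in the `k`-th dilate of `S` (Ehrhart counting function). -/
def ehr {n : ℕ} (L S : Set (Pt n)) (k : ℕ) : ℕ := (L ∩ (k : ℝ) • S).ncard

/-- The `h^*`-polynomial of a lattice polytope `S` with respect to the lattice `L`,
i.e. the numerator of the Ehrhart series `1 + ∑_{m ≥ 1} |L ∩ mS| t^m = h^*(t)/(1-t)^{dim S + 1}`;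
its coefficients are given by `h^*_i = ∑_j (-1)^j (dim S + 1 choose j) ehr(i - j)`.
By convention `h^*_∅ = 1`. -/
def hStarL {n : ℕ} (L S : Set (Pt n)) : Polynomial ℤ :=
  if S = ∅ then 1
  else
    ∑ i ∈ Finset.range (dimNat S + 1),
      Polynomial.C
          (∑ j ∈ Finset.range (i + 1),
            (-1 : ℤ) ^ j * ((dimNat S + 1).choose j : ℤ) * (ehr L S (i - j) : ℤ)) *
        Polynomial.X ^ i

/-- The degree of a lattice polytope: the degree of its `h^*`-polynomial. -/
def degL {n : ℕ} (L S : Set (Pt n)) : ℕ := (hStarL L S).natDegree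

/-- The codegree of a lattice polytope: `dim S + 1 - deg S` (and `0` for `∅`). -/
def codegL {n : ℕ} (L S : Set (Pt n)) : ℤ :=
  if S = ∅ then 0 else dimP S + 1 - degL L S

/-- Truncation of a polynomial to its terms of degree `< k`. -/
def truncLT (k : ℕ) (p : Polynomial ℤ) : Polynomial ℤ :=
  ∑ i ∈ Finset.range k, Polynomial.C (p.coeff i) * Polynomial.X ^ i

/-- The `g`-polynomial of the interval `[F, G]` in the (Eulerian) face poset of the
polytope `G`, computed with the recursion of Stanley:
`g = h = 1` in rank `0`, `h([F,G],t) = ∑_{F < H ≤ G} (t-1)^{ρ(H)-1} g([H,G],t)` and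
`g([F,G],t) = τ_{< e/2}((1-t) h([F,G],t))` in rank `e > 0`.
The first argument is a fuel parameter (any value `≥` the rank of the interval
gives the correct answer). -/
def gAux {n : ℕ} : ℕ → Set (Pt n) → Set (Pt n) → Polynomial ℤ
  | 0, _, _ => 1
  | fuel + 1, F, G =>
    if F = G then 1
    else
      truncLT (((dimP G - dimP F).toNat + 1) / 2)
        ((1 - Polynomial.X) *
          ∑ᶠ H ∈ {H : Set (Pt n) | IsFaceOf H G ∧ F ⊆ H ∧ F ≠ H},
            (Polynomial.X - 1) ^ ((dimP H - dimP F - 1).toNat) * gAux fuel H G)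

/-- The `g`-polynomial `g([F,G], t)` of the interval of faces between `F` and `G`. -/
def gPoly {n : ℕ} (F G : Set (Pt n)) : Polynomial ℤ := gAux (dimNat G + 2) F G

/-- The polynomial `S̃(S, t) = ∑_{∅ ≤ F ≤ S} (-1)^{dim S - dim F} h^*_F(t) g([F,S],t)`
of Borisov and Mavlyutov, with respect to the lattice `L`. -/
def StildeL {n : ℕ} (L S : Set (Pt n)) : Polynomial ℤ :=
  ∑ᶠ F ∈ {F : Set (Pt n) | IsFaceOf F S},
    (-1 : Polynomial ℤ) ^ ((dimP S - dimP F).toNat) * (hStarL L F * gPoly F S)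

/-- The lattice dual to `L ∩ W` inside the subspace `W` (under the dot product pairing). -/
def dualLatIn {n : ℕ} (L : Set (Pt n)) (W : Submodule ℝ (Pt n)) : Set (Pt n) :=
  {y | y ∈ W ∧ ∀ x ∈ L ∩ (W : Set (Pt n)), ∃ k : ℤ, dot y x = (k : ℝ)}

/-- `S` is a reflexive polytope with respect to the lattice `L` (inside its linear span):
`S` is a lattice polytope w.r.t. `L ∩ span S`, `0` lies in its (relative) interior, and the
dual polytope `{y ∈ span S | ⟨y,x⟩ ≥ -1 for all x ∈ S}` is a lattice polytope w.r.t. the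
dual lattice. -/
def IsReflexiveL {n : ℕ} (L S : Set (Pt n)) : Prop :=
  IsLat (L ∩ (Submodule.span ℝ S : Set (Pt n))) S ∧
  (0 : Pt n) ∈ intrinsicInterior ℝ S ∧
  IsLat (dualLatIn L (Submodule.span ℝ S))
    {y | y ∈ Submodule.span ℝ S ∧ ∀ x ∈ S, -1 ≤ dot y x}

/-- `m₀` witnesses that `S` is Gorenstein of index `r` w.r.t. `L`: `m₀` is a lattice point
in the (relative) interior of `r S` and `r S - m₀` is reflexive. -/
def GorWitness {n : ℕ} (L S : Set (Pt n)) (r : ℕ) (m₀ : Pt n) : Prop :=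
  m₀ ∈ L ∧ m₀ ∈ intrinsicInterior ℝ ((r : ℝ) • S) ∧
  IsReflexiveL L ((fun x => x - m₀) '' ((r : ℝ) • S))

/-- `S` is a Gorenstein polytope of index `r` with respect to the lattice `L`:
`r S` contains a unique interior lattice point `m₀`, and `r S - m₀` is reflexive. -/
def IsGorensteinL {n : ℕ} (L S : Set (Pt n)) (r : ℕ) : Prop :=
  IsLat L S ∧ 0 < r ∧ (∃ m₀, GorWitness L S r m₀) ∧
  ∀ m₁ m₂,
    (m₁ ∈ L ∧ m₁ ∈ intrinsicInterior ℝ ((r : ℝ) • S)) →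
    (m₂ ∈ L ∧ m₂ ∈ intrinsicInterior ℝ ((r : ℝ) • S)) → m₁ = m₂

/-- `S` is a Gorenstein polytope (of some index) w.r.t. `L`; by convention `∅` is Gorenstein. -/
def IsGorensteinPoly {n : ℕ} (L S : Set (Pt n)) : Prop :=
  S = ∅ ∨ ∃ r, IsGorensteinL L S r

/-- Embedding at height 1: `x ↦ (x, 1)`. -/
def emb1 {n : ℕ} : Pt n → Pt (n + 1) := fun x => Fin.snoc x 1

/-- Embedding at height 0: `x ↦ (x, 0)`. -/
def emb0 {n : ℕ} : Pt n → Pt (n + 1) := fun x => Fin.snoc x 0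

/-- The linear span of `S × {1}`: the span of the cone `C_S` over `S`. -/
def Wspan {n : ℕ} (S : Set (Pt n)) : Submodule ℝ (Pt (n + 1)) :=
  Submodule.span ℝ (emb1 '' S)

/-- The dual Gorenstein polytope `S^×` of a Gorenstein polytope `S` of index `r` with
unique interior lattice point `m₀` of `r S`: the support polytope
`{y ∈ C_S^∨ | ⟨y, (m₀, r)⟩ = 1}` of the dual of the cone `C_S` over `S × {1}`
(taken inside the linear span of `S × {1}`, using the dot product as the pairing). -/
def gorDual {n : ℕ} (S : Set (Pt n)) (r : ℕ) (m₀ : Pt n) : Set (Pt (n + 1)) :=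
  {y | y ∈ Wspan S ∧ (∀ x ∈ S, 0 ≤ dot y (emb1 x)) ∧ dot y (Fin.snoc m₀ (r : ℝ)) = 1}

/-- The face `F^*` of the dual Gorenstein polytope `S^×` corresponding to the face `F` of
`S`:  `F^* = {y ∈ S^× | ⟨y, (x,1)⟩ = 0 for all x ∈ F}`. -/
def faceDual {n : ℕ} (S : Set (Pt n)) (r : ℕ) (m₀ : Pt n) (F : Set (Pt n)) :
    Set (Pt (n + 1)) :=
  {y | y ∈ gorDual S r m₀ ∧ ∀ x ∈ F, dot y (emb1 x) = 0}

/-- The lattice dual (under the dot product) to the lattice `ℤ^{n+1} ∩ span(S × {1})`;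
this is the lattice with respect to which `S^×` is a lattice polytope. -/
def dualLatOf {n : ℕ} (S : Set (Pt n)) : Set (Pt (n + 1)) :=
  {y | y ∈ Wspan S ∧ ∀ x, isLatticePt x → x ∈ Wspan S → ∃ k : ℤ, dot y x = (k : ℝ)}

/-- The field `ℚ(u,v)` of rational functions in two variables. -/
abbrev KK : Type := FractionRing (MvPolynomial (Fin 2) ℚ)

/-- The rational function `u`. -/
def uu : KK := algebraMap (MvPolynomial (Fin 2) ℚ) KK (MvPolynomial.X 0)

/-- The rational function `v`. -/
def vv : KK := algebraMap (MvPolynomial (Fin 2) ℚ) KK (MvPolynomial.X 1)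

/-- The stringy `E`-function of a Gorenstein polytope `S` of index `r` (with `m₀` the unique
interior lattice point of `r S`):
`E_st(S; u,v) = (uv)^{-r} ∑_{∅ ≤ F ≤ S} (-u)^{dim F + 1} S̃(F, u⁻¹ v) S̃(F^*, uv) ∈ ℚ(u,v)`. -/
def Est {n : ℕ} (S : Set (Pt n)) (r : ℕ) (m₀ : Pt n) : KK :=
  (uu * vv) ^ (-(r : ℤ)) *
    ∑ᶠ F ∈ {F : Set (Pt n) | IsFaceOf F S},
      (-uu) ^ (dimP F + 1) * Polynomial.aeval (uu⁻¹ * vv) (StildeL (stdL n) F) *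
        Polynomial.aeval (uu * vv) (StildeL (dualLatOf S) (faceDual S r m₀ F))

/-- An element of `ℚ(u,v)` "is a polynomial": it lies in `ℤ[u,v]`. -/
def IsPolyEst (e : KK) : Prop :=
  ∃ p : MvPolynomial (Fin 2) ℤ,
    e = MvPolynomial.aeval (fun i : Fin 2 => if i = 0 then uu else vv) p

/-- `S` is a join of its faces `F` and `G`. -/
def IsJoin {n : ℕ} (S F G : Set (Pt n)) : Prop :=
  IsFaceOf F S ∧ IsFaceOf G S ∧ S = convexHull ℝ (F ∪ G) ∧ dimP F + dimP G = dimP S - 1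

/-- `S` and `T` are isomorphic lattice polytopes (with respect to the standard lattice):
there is an affine transformation of the ambient space mapping the lattice onto itself
and `S` onto `T`. -/
def IsoLat {n : ℕ} (S T : Set (Pt n)) : Prop :=
  ∃ A : Pt n ≃ᵃ[ℝ] Pt n, (∀ x, isLatticePt x ↔ isLatticePt (A x)) ∧ A '' S = T

/-- The Cayley polytope `F * G` of two polytopes: the convex hull of `F × {1}` and
`G × {0}`. -/
def cayley2 {n : ℕ} (F G : Set (Pt n)) : Set (Pt (n + 1)) :=
  convexHull ℝ (emb1 '' F ∪ emb0 '' G)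

/-- `S` is a Cayley join of its faces `F` and `G`:
`dim F + dim G = dim S - 1` and the Cayley polytope `F * G` is isomorphic (as a lattice
polytope) to `S` (embedded at height 0). -/
def IsCayleyJoin {n : ℕ} (S F G : Set (Pt n)) : Prop :=
  IsFaceOf F S ∧ IsFaceOf G S ∧ dimP F + dimP G = dimP S - 1 ∧
  IsoLat (cayley2 F G) (emb0 '' S)

/-- `S` is a ℤ-join of its faces `F` and `G`: `S` is the convex hull of `F ∪ G` and the
natural map `M(F) ⊕ M(G) → M ⊕ ℤ` is an isomorphism, where `M(F) = lin(F × {1}) ∩ (M ⊕ ℤ)`;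
i.e. every lattice point of `M ⊕ ℤ` is uniquely the sum of a lattice point in `lin(F × {1})`
and a lattice point in `lin(G × {1})`. -/
def IsZJoin {n : ℕ} (S F G : Set (Pt n)) : Prop :=
  IsFaceOf F S ∧ IsFaceOf G S ∧ S = convexHull ℝ (F ∪ G) ∧
  ∀ x : Pt (n + 1), isLatticePt x →
    ∃! p : Pt (n + 1) × Pt (n + 1),
      (isLatticePt p.1 ∧ p.1 ∈ Wspan F) ∧ (isLatticePt p.2 ∧ p.2 ∈ Wspan G) ∧
        x = p.1 + p.2

/-- The points of the standard lattice lying in a subspace `W`. -/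
def latIn {n : ℕ} (W : Submodule ℝ (Pt n)) : Set (Pt n) := {x | isLatticePt x ∧ x ∈ W}

/-- `S` (with lattice `LS`) and `T` (with lattice `LT`) are dual Gorenstein polytopes,
with respect to the dot product pairing: the pairing between the spans is perfect, the
lattices are dual to each other, and the cones over `S` and `T` are dual reflexive
Gorenstein cones, each being the support polytope of the dual of the other (cut out by the
interior lattice points `nf` resp. `mm`). -/
def IsDualGorPair {n : ℕ} (LS LT S T : Set (Pt n)) : Prop :=
  (∀ x ∈ Submodule.span ℝ S, (∀ y ∈ Submodule.span ℝ T, dot x y = 0) → x = 0) ∧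
  (∀ y ∈ Submodule.span ℝ T, (∀ x ∈ Submodule.span ℝ S, dot x y = 0) → y = 0) ∧
  IsLat LS S ∧ IsLat LT T ∧
  LT = {y | y ∈ Submodule.span ℝ T ∧ ∀ x ∈ LS, ∃ k : ℤ, dot x y = (k : ℝ)} ∧
  LS = {x | x ∈ Submodule.span ℝ S ∧ ∀ y ∈ LT, ∃ k : ℤ, dot x y = (k : ℝ)} ∧
  ∃ nf ∈ LT, ∃ mm ∈ LS,
    (∀ x ∈ S, dot nf x = 1) ∧ (∀ y ∈ T, dot mm y = 1) ∧
    T = {y | y ∈ Submodule.span ℝ T ∧ (∀ x ∈ S, 0 ≤ dot x y) ∧ dot mm y = 1} ∧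
    S = {x | x ∈ Submodule.span ℝ S ∧ (∀ y ∈ T, 0 ≤ dot x y) ∧ dot nf x = 1}

/-- Orthogonal projection onto the orthogonal complement of `U` (w.r.t. the dot product);
this realizes the quotient of the ambient space by `U`. -/
def perpProj {m : ℕ} (U : Submodule ℝ (Pt m)) : Pt m → Pt m :=
  fun x =>
    (WithLp.linearEquiv 2 ℝ (Fin m → ℝ))
      ((Submodule.orthogonalProjectionOnto
          (Submodule.map (WithLp.linearEquiv 2 ℝ (Fin m → ℝ)).symm.toLinearMap U)ᗮ
          ((WithLp.linearEquiv 2 ℝ (Fin m → ℝ)).symm x) : EuclideanSpace ℝ (Fin m)))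

/-- The `i`-th "unit vector" used for Cayley polytopes: the standard basis vector `e_i` of
`ℤ^{r-1}` for `i < r - 1`, and `0` for `i = r - 1` (the last coordinate is deleted). -/
def unitVec (r : ℕ) (i : Fin r) : Pt (r - 1) := fun j => if (j : ℕ) = (i : ℕ) then 1 else 0

/-- The embedding `x ↦ (x, e_i)` used in the definition of Cayley polytopes. -/
def cayleyEmb {d r : ℕ} (i : Fin r) : Pt d → Pt (d + (r - 1)) :=
  fun x => Fin.append x (unitVec r i)

/-- The Cayley polytope `P_1 * ⋯ * P_r` of a family of polytopes in `ℝ^d`, as a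
(full-dimensional) lattice polytope in `ℝ^{d + r - 1}`. -/
def cayleyFam {d r : ℕ} (Q : Fin r → Set (Pt d)) : Set (Pt (d + (r - 1))) :=
  convexHull ℝ (⋃ i, cayleyEmb i '' Q i)

/-- The face of the Cayley polytope corresponding to a subfamily indexed by `I`. -/
def subCayley {d r : ℕ} (Q : Fin r → Set (Pt d)) (I : Finset (Fin r)) :
    Set (Pt (d + (r - 1))) :=
  convexHull ℝ (⋃ i ∈ I, cayleyEmb i '' Q i)

/-- `S` is an irreducible Gorenstein polytope: it is a nonempty Gorenstein polytope of some
index `r`, with no proper face `F` (`∅ ≠ F ≠ S`) such that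
`codeg F + codeg F^* = r`. -/
def IsIrredGor {n : ℕ} (S : Set (Pt n)) : Prop :=
  S.Nonempty ∧ ∃ r, IsGorensteinL (stdL n) S r ∧
    ∀ m₀, GorWitness (stdL n) S r m₀ →
      ∀ F, IsFaceOf F S → F ≠ ∅ → F ≠ S →
        codegL (stdL n) F + codegL (dualLatOf S) (faceDual S r m₀ F) ≠ (r : ℤ)

/-- `Q` is a nef-partition of the reflexive polytope `P ⊂ ℝ^d`: each `Q i` is a nonempty
lattice polytope containing `0` and `P = Q 1 + ⋯ + Q r` (Minkowski sum) is a reflexive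
polytope of dimension `d`. -/
def IsNefPartition {d r : ℕ} (Q : Fin r → Set (Pt d)) (P : Set (Pt d)) : Prop :=
  (∀ i, (Q i).Nonempty ∧ IsLat (stdL d) (Q i) ∧ (0 : Pt d) ∈ Q i) ∧
  P = ∑ i, Q i ∧ IsReflexiveL (stdL d) P ∧ dimP P = (d : ℤ)

/-- The nef-partition `Q` is irreducible: no nonempty proper subfamily has `0` in the
relative interior of its Minkowski sum. -/
def IsIrredNef {d r : ℕ} (Q : Fin r → Set (Pt d)) : Prop :=
  ∀ I : Finset (Fin r), I.Nonempty → I ≠ Finset.univ →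
    (0 : Pt d) ∉ intrinsicInterior ℝ (∑ i ∈ I, Q i)

/-- `S` is a ℤ-join of the faces `F j`: `S` is the convex hull of their union, and every
lattice point of `M ⊕ ℤ` decomposes uniquely as a sum of lattice points in the spans
`lin(F j × {1})`. -/
def IsMultiZJoin {n k : ℕ} (S : Set (Pt n)) (F : Fin k → Set (Pt n)) : Prop :=
  (∀ j, IsFaceOf (F j) S) ∧ S = convexHull ℝ (⋃ j, F j) ∧
  ∀ x : Pt (n + 1), isLatticePt x →
    ∃! f : Fin k → Pt (n + 1),
      (∀ j, isLatticePt (f j) ∧ f j ∈ Wspan (F j)) ∧ x = ∑ j, f j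

/-- The nef-partition `Q` splits as a direct sum over `ℤ` with respect to the partition
`I` of the index set: each subfamily sums to a reflexive polytope (w.r.t. the induced
lattice), and the lattice `M` is the direct sum of the lattices `M_j = lin(P_{I_j}) ∩ M`. -/
def SplitsOverZ {d r k : ℕ} (Q : Fin r → Set (Pt d)) (I : Fin k → Finset (Fin r)) : Prop :=
  (∀ j, IsReflexiveL (stdL d) (∑ i ∈ I j, Q i)) ∧
  ∀ x : Pt d, isLatticePt x →
    ∃! f : Fin k → Pt d,
      (∀ j, isLatticePt (f j) ∧ f j ∈ Submodule.span ℝ ((∑ i ∈ I j, Q i : Set (Pt d)))) ∧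
        x = ∑ j, f j


/-!
The ℤ-join condition says that `ℤ^{n+1} = M(F) ⊕ M(G)`. Sending each standard basis vector to its
`M(F)`-component defines an integral linear projection `π`. Faces of a lattice polytope are
lattice polytopes, so `lin(F × {1})` and `lin(G × {1})` are spanned by lattice points, on which
uniqueness of the decomposition forces `π` to be the identity, resp. zero. Hence
`ℝ^{n+1} = lin(F × {1}) ⊕ lin(G × {1})`, which is the dimension count `dim F + dim G = n - 1`.
Moreover the last coordinate `ℓ` of `π` is an integral linear form equal to `1` on `F × {1}` and
to `0` on `G × {1}`; the unimodular shear along `e_{n+1}` with height `ℓ` then moves `F × {1}`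
down to `F × {0}` and fixes `G × {0}`, carrying `F * G` onto `P × {0}`.
-/

section LatticePoints

variable {m : ℕ}

lemma isLatticePt_zero : isLatticePt (0 : Pt m) := fun _ => ⟨0, by simp⟩

lemma isLatticePt.add {x y : Pt m} (hx : isLatticePt x) (hy : isLatticePt y) :
    isLatticePt (x + y) := by
  intro i
  obtain ⟨k, hk⟩ := hx i
  obtain ⟨l, hl⟩ := hy i
  exact ⟨k + l, by simp [hk, hl]⟩

lemma isLatticePt.intCast_smul {c : ℝ} {x : Pt m} (hc : ∃ k : ℤ, c = k) (hx : isLatticePt x) :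
    isLatticePt (c • x) := by
  intro i
  obtain ⟨k, rfl⟩ := hc
  obtain ⟨l, hl⟩ := hx i
  exact ⟨k * l, by simp [hl]⟩

lemma isLatticePt_single_one (i : Fin m) : isLatticePt (Pi.single i (1 : ℝ)) := by
  intro j
  by_cases h : j = i
  · exact ⟨1, by simp [h]⟩
  · exact ⟨0, by simp [h]⟩

lemma isLatticePt_linearCombination {k : ℕ} {v : Fin k → Pt m} (hv : ∀ i, isLatticePt (v i))
    {c : Pt k} (hc : isLatticePt c) : isLatticePt (Fintype.linearCombination ℝ v c) := by
  intro j
  choose a ha using hc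
  choose b hb using hv
  exact ⟨∑ i, a i * b i j, by simp [Fintype.linearCombination_apply, Finset.sum_apply, ha, hb]⟩

end LatticePoints

section Embeddings

variable {n : ℕ}

def emb0Linear (n : ℕ) : Pt n →ₗ[ℝ] Pt (n + 1) where
  toFun := emb0
  map_add' x y := by ext j; refine Fin.lastCases ?_ (fun i => ?_) j <;> simp [emb0]
  map_smul' c x := by ext j; refine Fin.lastCases ?_ (fun i => ?_) j <;> simp [emb0]

lemma emb0Linear_injective : Function.Injective (emb0Linear n) := by
  intro x y h
  ext i
  simpa [emb0Linear, emb0] using congrFun h i.castSucc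

lemma emb1_eq_emb0_add (x : Pt n) : emb1 x = emb0 x + Pi.single (Fin.last n) 1 := by
  ext j
  refine Fin.lastCases ?_ (fun i => ?_) j
  · simp [emb0, emb1]
  · simp [emb0, emb1, (Fin.castSucc_lt_last i).ne]

def emb1Affine (n : ℕ) : Pt n →ᵃ[ℝ] Pt (n + 1) where
  toFun := emb1
  linear := emb0Linear n
  map_vadd' x v := by
    rw [vadd_eq_add, vadd_eq_add, emb1_eq_emb0_add, emb1_eq_emb0_add, ← add_assoc]
    exact congrArg (· + _) ((emb0Linear n).map_add v x)

@[simp] lemma emb0_last (x : Pt n) : emb0 x (Fin.last n) = 0 := by simp [emb0]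

@[simp] lemma emb1_last (x : Pt n) : emb1 x (Fin.last n) = 1 := by simp [emb1]

lemma isLatticePt.emb1 {x : Pt n} (hx : isLatticePt x) : isLatticePt (emb1 x) := by
  intro j
  refine Fin.lastCases ⟨1, by simp⟩ (fun i => ?_) j
  obtain ⟨k, hk⟩ := hx i
  exact ⟨k, by simpa [GorST.emb1] using hk⟩

end Embeddings

lemma Wspan_convexHull {n : ℕ} (V : Set (Pt n)) :
    Wspan (convexHull ℝ V) = Submodule.span ℝ (emb1 '' V) := by
  have himage : emb1 '' convexHull ℝ V = convexHull ℝ (emb1 '' V) :=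
    (emb1Affine n).image_convexHull V
  refine le_antisymm ?_ (Submodule.span_mono (Set.image_mono (subset_convexHull ℝ V)))
  rw [Wspan, himage, Submodule.span_le]
  exact convexHull_min Submodule.subset_span (Submodule.convex _)

theorem finrank_span_eq_finrank_vectorSpan_add_one {K V : Type*} [Field K] [AddCommGroup V]
    [Module K V] [FiniteDimensional K V] (φ : Module.Dual K V) {s : Set V} (hs : s.Nonempty)
    (hφ : ∀ x ∈ s, φ x = 1) :
    Module.finrank K (Submodule.span K s) = Module.finrank K (vectorSpan K s) + 1 := by
  obtain ⟨p, hp⟩ := hs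
  have hvec_le_ker : vectorSpan K s ≤ LinearMap.ker φ := by
    rw [vectorSpan_def, Submodule.span_le]
    rintro _ ⟨x, hx, y, hy, rfl⟩
    simp [hφ x hx, hφ y hy]
  have hspan : Submodule.span K s = vectorSpan K s ⊔ K ∙ p := by
    refine le_antisymm (Submodule.span_le.2 fun x hx => ?_) (sup_le ?_ ?_)
    · rw [← sub_add_cancel x p]
      exact Submodule.add_mem_sup (vsub_mem_vectorSpan K hx hp)
        (Submodule.mem_span_singleton_self p)
    · rw [vectorSpan_def, Submodule.span_le]
      rintro _ ⟨x, hx, y, hy, rfl⟩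
      exact Submodule.sub_mem _ (Submodule.subset_span hx) (Submodule.subset_span hy)
    · exact Submodule.span_mono (Set.singleton_subset_iff.2 hp)
  have hinf : vectorSpan K s ⊓ K ∙ p = ⊥ := by
    refine eq_bot_iff.2 fun x ⟨hx, hxp⟩ => ?_
    obtain ⟨a, rfl⟩ := Submodule.mem_span_singleton.1 hxp
    have : a * φ p = 0 := by simpa using hvec_le_ker hx
    simp_all
  have hp0 : p ≠ 0 := fun h => by simpa [h] using hφ p hp
  have := Submodule.finrank_sup_add_finrank_inf_eq (vectorSpan K s) (K ∙ p)
  rwa [hinf, finrank_bot, add_zero, finrank_span_singleton hp0, ← hspan] at this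

lemma finrank_Wspan {n : ℕ} (F : Set (Pt n)) :
    (Module.finrank ℝ (Wspan F) : ℤ) = dimP F + 1 := by
  rcases F.eq_empty_or_nonempty with rfl | hF
  · rw [Wspan, Set.image_empty, Submodule.span_empty]
    simp [dimP]
  have hlast : ∀ y ∈ emb1 '' F, (LinearMap.proj (Fin.last n) : Pt (n + 1) →ₗ[ℝ] ℝ) y = 1 := by
    rintro _ ⟨x, -, rfl⟩
    simp
  have hvec :
      Module.finrank ℝ (vectorSpan ℝ (emb1 '' F)) = Module.finrank ℝ (vectorSpan ℝ F) := by
    change Module.finrank ℝ (vectorSpan ℝ (emb1Affine n '' F)) = _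
    rw [← (emb1Affine n).map_vectorSpan]
    exact (Submodule.equivMapOfInjective _ emb0Linear_injective _).finrank_eq.symm
  rw [Wspan, finrank_span_eq_finrank_vectorSpan_add_one _ (hF.image emb1) hlast, hvec, dimP,
    if_neg hF.ne_empty, direction_affineSpan]
  push_cast
  rfl

/-- By Krein–Milman a face is the convex hull of its extreme points, and these are vertices of
the polytope. -/
theorem IsLat.of_isFaceOf {n : ℕ} {L S F : Set (Pt n)} (hS : IsLat L S) (hF : IsFaceOf F S) :
    IsLat L F := by
  classical
  obtain ⟨V, hVL, rfl⟩ := hS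
  refine ⟨V.filter (· ∈ F), fun x hx => hVL (Finset.mem_filter.1 hx).1, ?_⟩
  have hFconv : Convex ℝ F := IsExposed.convex hF (convex_convexHull ℝ _)
  have hFcpt : IsCompact F := IsExposed.isCompact hF (V.finite_toSet.isCompact_convexHull ℝ)
  refine le_antisymm ?_ (convexHull_min (fun x hx => (Finset.mem_filter.1 hx).2) hFconv)
  have hext : F.extremePoints ℝ ⊆ (V.filter (· ∈ F) : Set (Pt n)) := fun x hx => by
    have hxV := extremePoints_convexHull_subset
      ((IsExposed.isExtreme hF).extremePoints_subset_extremePoints hx)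
    simpa using ⟨hxV, hx.1⟩
  calc F = closure (convexHull ℝ (F.extremePoints ℝ)) :=
        (closure_convexHull_extremePoints hFcpt hFconv).symm
    _ ⊆ convexHull ℝ (V.filter (· ∈ F) : Set (Pt n)) :=
        closure_minimal (convexHull_mono hext) ((Finset.finite_toSet _).isClosed_convexHull ℝ)

section LatticeDirectSum

variable {m : ℕ} {W₁ W₂ : Submodule ℝ (Pt m)}

def IsLatticeDirectSum (W₁ W₂ : Submodule ℝ (Pt m)) : Prop :=
  ∀ x : Pt m, isLatticePt x →
    ∃! p : Pt m × Pt m,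
      (isLatticePt p.1 ∧ p.1 ∈ W₁) ∧ (isLatticePt p.2 ∧ p.2 ∈ W₂) ∧ x = p.1 + p.2

lemma IsLatticeDirectSum.sup_eq_top (h : IsLatticeDirectSum W₁ W₂) : W₁ ⊔ W₂ = ⊤ := by
  rw [eq_top_iff, ← (Pi.basisFun ℝ (Fin m)).span_eq, Submodule.span_le]
  rintro _ ⟨i, rfl⟩
  obtain ⟨p, ⟨⟨-, hp₁⟩, ⟨-, hp₂⟩, hsum⟩, -⟩ := h _ (isLatticePt_single_one i)
  simpa [hsum] using Submodule.add_mem_sup hp₁ hp₂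

theorem IsLatticeDirectSum.exists_proj (h : IsLatticeDirectSum W₁ W₂) {s₁ s₂ : Set (Pt m)}
    (hs₁ : ∀ x ∈ s₁, isLatticePt x) (hs₂ : ∀ x ∈ s₂, isLatticePt x)
    (hW₁ : Submodule.span ℝ s₁ = W₁) (hW₂ : Submodule.span ℝ s₂ = W₂) :
    ∃ π : Pt m →ₗ[ℝ] Pt m, (∀ y, isLatticePt y → isLatticePt (π y)) ∧
      (∀ y ∈ W₁, π y = y) ∧ ∀ y ∈ W₂, π y = 0 := by
  choose p hp using fun i : Fin m => (h _ (isLatticePt_single_one i)).exists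
  set π₁ := Fintype.linearCombination ℝ fun i => (p i).1
  set π₂ := Fintype.linearCombination ℝ fun i => (p i).2
  have hπ : π₁ + π₂ = LinearMap.id := by
    refine (Pi.basisFun ℝ (Fin m)).ext fun i => ?_
    rw [LinearMap.add_apply, Pi.basisFun_apply, Fintype.linearCombination_apply_single,
      Fintype.linearCombination_apply_single, one_smul, one_smul, LinearMap.id_apply, (hp i).2.2]
  have hπ₁ : ∀ y, π₁ y ∈ W₁ := fun y => by
    rw [Fintype.linearCombination_apply]
    exact Submodule.sum_mem _ fun i _ => Submodule.smul_mem _ _ (hp i).1.2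
  have hπ₂ : ∀ y, π₂ y ∈ W₂ := fun y => by
    rw [Fintype.linearCombination_apply]
    exact Submodule.sum_mem _ fun i _ => Submodule.smul_mem _ _ (hp i).2.1.2
  have hdecomp : ∀ y, isLatticePt y → ∀ q : Pt m × Pt m,
      (isLatticePt q.1 ∧ q.1 ∈ W₁) ∧ (isLatticePt q.2 ∧ q.2 ∈ W₂) ∧ y = q.1 + q.2 →
        q = (π₁ y, π₂ y) := by
    intro y hy q hq
    obtain ⟨r, -, hr⟩ := h y hy
    refine (hr q hq).trans (hr _ ⟨⟨?_, ?_⟩, ⟨?_, ?_⟩, ?_⟩).symm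
    · exact isLatticePt_linearCombination (fun i => (hp i).1.1) hy
    · exact hπ₁ y
    · exact isLatticePt_linearCombination (fun i => (hp i).2.1.1) hy
    · exact hπ₂ y
    · exact (congrArg (· y) hπ).symm
  refine ⟨π₁, fun y hy => isLatticePt_linearCombination (fun i => (hp i).1.1) hy, ?_, ?_⟩
  · intro y hy
    rw [← hW₁] at hy
    refine LinearMap.eqOn_span (g := LinearMap.id) (fun x hx => ?_) hy
    have hx₁ : x ∈ W₁ := hW₁ ▸ Submodule.subset_span hx
    exact (congrArg Prod.fst (hdecomp x (hs₁ x hx) (x, 0)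
      ⟨⟨hs₁ x hx, hx₁⟩, ⟨isLatticePt_zero, W₂.zero_mem⟩, (add_zero x).symm⟩)).symm
  · intro y hy
    rw [← hW₂] at hy
    refine LinearMap.eqOn_span (g := 0) (fun x hx => ?_) hy
    have hx₂ : x ∈ W₂ := hW₂ ▸ Submodule.subset_span hx
    exact (congrArg Prod.fst (hdecomp x (hs₂ x hx) (0, x)
      ⟨⟨isLatticePt_zero, W₁.zero_mem⟩, ⟨hs₂ x hx, hx₂⟩, (zero_add x).symm⟩)).symm

end LatticeDirectSum

lemma dimP_add_dimP_of_isCompl {n : ℕ} {F G : Set (Pt n)} (h : IsCompl (Wspan F) (Wspan G)) :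
    dimP F + dimP G = n - 1 := by
  have hrank := Submodule.finrank_add_eq_of_isCompl h
  rw [Module.finrank_fin_fun] at hrank
  have hF := finrank_Wspan F
  have hG := finrank_Wspan G
  omega

theorem isoLat_cayley2 {n : ℕ} {F G : Set (Pt n)} (ℓ : Module.Dual ℝ (Pt (n + 1)))
    (hℓ : ∀ y, isLatticePt y → ∃ k : ℤ, ℓ y = k)
    (hF : ∀ x ∈ F, ℓ (emb1 x) = 1) (hG : ∀ x ∈ G, ℓ (emb1 x) = 0) :
    IsoLat (cayley2 F G) (emb0 '' convexHull ℝ (F ∪ G)) := by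
  set e : Pt (n + 1) := Pi.single (Fin.last n) 1
  set c := ℓ e
  set μ : Module.Dual ℝ (Pt (n + 1)) := c • LinearMap.proj (Fin.last n) - ℓ
  have hμe : μ e = 0 := by simp [μ, e, c]
  let A : Pt (n + 1) ≃ᵃ[ℝ] Pt (n + 1) :=
    (AffineEquiv.constVAdd ℝ _ (-(c • e))).trans (LinearEquiv.transvection hμe).toAffineEquiv
  have hA : ∀ y, A y = y + (μ y - c) • e := fun y => by
    change LinearEquiv.transvection hμe (-(c • e) + y) = _
    rw [LinearEquiv.transvection.apply, map_add, map_neg, map_smul, hμe, smul_zero, neg_zero,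
      zero_add]
    module
  have hAsymm : ∀ y, A.symm y = y + (c - μ y) • e := fun y => by
    rw [AffineEquiv.symm_apply_eq, hA, map_add, map_smul, hμe, smul_zero, add_zero]
    module
  have hμ : ∀ y, isLatticePt y → ∃ k : ℤ, μ y = k := fun y hy => by
    obtain ⟨a, ha⟩ := hℓ e (isLatticePt_single_one _)
    obtain ⟨b, hb⟩ := hy (Fin.last n)
    obtain ⟨d, hd⟩ := hℓ y hy
    exact ⟨a * b - d, by simp [μ, c, ha, hb, hd]⟩
  have hc : ∃ k : ℤ, c = k := hℓ e (isLatticePt_single_one _)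
  refine ⟨A, fun y => ⟨fun hy => ?_, fun hy => ?_⟩, ?_⟩
  · obtain ⟨a, ha⟩ := hμ y hy
    obtain ⟨b, hb⟩ := hc
    rw [hA]
    exact hy.add ((isLatticePt_single_one _).intCast_smul ⟨a - b, by simp [ha, hb]⟩)
  · obtain ⟨a, ha⟩ := hμ (A y) hy
    obtain ⟨b, hb⟩ := hc
    rw [← A.symm_apply_apply y, hAsymm]
    exact hy.add ((isLatticePt_single_one _).intCast_smul ⟨b - a, by simp [ha, hb]⟩)
  · have hAF : ∀ x ∈ F, A (emb1 x) = emb0 x := fun x hx => by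
      have : μ (emb1 x) - c = -1 := by simp [μ, hF x hx]
      rw [hA, this, neg_one_smul, emb1_eq_emb0_add, add_neg_cancel_right]
    have hAG : ∀ x ∈ G, A (emb0 x) = emb0 x := fun x hx => by
      have hℓ0 : ℓ (emb0 x) = -c := by
        rw [eq_sub_of_add_eq (emb1_eq_emb0_add x).symm, map_sub, hG x hx, zero_sub]
      have : μ (emb0 x) - c = 0 := by simp [μ, hℓ0, emb0_last]
      rw [hA, this, zero_smul, add_zero]
    have h0 : emb0 '' convexHull ℝ (F ∪ G) = convexHull ℝ (emb0 '' F ∪ emb0 '' G) := by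
      rw [← Set.image_union]
      exact (emb0Linear n).image_convexHull _
    rw [h0, cayley2, ← AffineEquiv.coe_toAffineMap, AffineMap.image_convexHull,
      AffineEquiv.coe_toAffineMap, Set.image_union,
      Set.image_image, Set.image_image, Set.image_congr hAF, Set.image_congr hAG]

/-- If a full-dimensional lattice polytope `P` is a ℤ-join of faces `F` and
`G`, then `P` is a Cayley join of `F` and `G`. -/
theorem stmt17 {n : ℕ} (S F G : Set (Pt n)) (hS : IsLat (stdL n) S)
    (hdim : dimP S = (n : ℤ)) (hZJ : IsZJoin S F G) :
    IsCayleyJoin S F G := by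
  obtain ⟨hFS, hGS, rfl, hdec⟩ := hZJ
  obtain ⟨VF, hVF, hF⟩ := hS.of_isFaceOf hFS
  obtain ⟨VG, hVG, hG⟩ := hS.of_isFaceOf hGS
  have hWF : Submodule.span ℝ (emb1 '' VF) = Wspan F := by rw [hF, Wspan_convexHull]
  have hWG : Submodule.span ℝ (emb1 '' VG) = Wspan G := by rw [hG, Wspan_convexHull]
  have hlat : ∀ V : Set (Pt n), V ⊆ stdL n → ∀ y ∈ emb1 '' V, isLatticePt y := by
    rintro V hV _ ⟨x, hx, rfl⟩
    exact (hV hx).emb1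
  obtain ⟨π, hπ, hπF, hπG⟩ :=
    IsLatticeDirectSum.exists_proj hdec (hlat _ hVF) (hlat _ hVG) hWF hWG
  have hcompl : IsCompl (Wspan F) (Wspan G) :=
    ⟨disjoint_iff.2 (eq_bot_iff.2 fun y ⟨hyF, hyG⟩ => (hπF y hyF).symm.trans (hπG y hyG)),
      codisjoint_iff.2 (IsLatticeDirectSum.sup_eq_top hdec)⟩
  refine ⟨hFS, hGS, by rw [dimP_add_dimP_of_isCompl hcompl, hdim], ?_⟩
  refine isoLat_cayley2 (LinearMap.proj (Fin.last n) ∘ₗ π) (fun y hy => hπ y hy _) ?_ ?_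
  · intro x hx
    simp [hπF _ (Submodule.subset_span ⟨x, hx, rfl⟩)]
  · intro x hx
    simp [hπG _ (Submodule.subset_span ⟨x, hx, rfl⟩)]

end GorST
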